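/- arXiv:0712.0292 — 11 statements merged into one kernel-verified Lean document; each statement's English description precedes it below -/
import Mathlib

section
/- Define f(x,b) = ∏_{k=1}^∞ k(x+k-1)/((k-b)(x+k+b-1)) for x, b ∈ (0,1). Then f(x,b)·sin(πb) = f(b,x)·sin(πx). -/
/-!
The partial products `m * ∏_{k ≤ m} (t+k-1)(k-t)/k²` are those of `1/(Γ(t)Γ(1-t))`, and by
Euler's sine product they tend to `sin(πt)/π`. Multiplying the `k`-th factor of `f(x,b)` by the
`k`-th such factor at `t = b` gives `(x+k-1)(b+k-1)/(k(x+b+k-1))`, which is symmetric in `x`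
and `b`; passing to the limit yields `f(x,b) · sin(πb)/π = f(b,x) · sin(πx)/π`.
-/

open Real Filter Finset Topology

noncomputable def reflectionFactor (t : ℝ) (k : ℕ) : ℝ :=
  (t + k - 1) * (k - t) / (k : ℝ) ^ 2

lemma add_natCast_mul_prod_reflectionFactor (t : ℝ) (m : ℕ) :
    (t + m) * ∏ k ∈ Icc 1 m, reflectionFactor t k
      = t * ∏ k ∈ Icc 1 m, (1 - t ^ 2 / (k : ℝ) ^ 2) := by
  induction m with
  | zero => simp
  | succ n ih =>
    rw [prod_Icc_succ_top (by omega), prod_Icc_succ_top (by omega), ← mul_assoc t, ← ih,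
      reflectionFactor]
    push_cast
    field_simp
    ring

lemma tendsto_natCast_mul_prod_reflectionFactor (t : ℝ) :
    Tendsto (fun m : ℕ => m * ∏ k ∈ Icc 1 m, reflectionFactor t k) atTop
      (𝓝 (sin (π * t) / π)) := by
  have euler : Tendsto (fun m : ℕ => (t + m) * ∏ k ∈ Icc 1 m, reflectionFactor t k) atTop
      (𝓝 (sin (π * t) / π)) := by
    refine ((tendsto_euler_sin_prod t).div_const π).congr fun m => ?_
    rw [add_natCast_mul_prod_reflectionFactor, ← Ico_add_one_right_eq_Icc, prod_Ico_eq_prod_range]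
    simp only [Nat.cast_add, Nat.cast_one, add_comm 1, Nat.add_sub_cancel]
    field_simp [pi_ne_zero]
  refine (one_mul (sin (π * t) / π) ▸ (tendsto_natCast_div_add_atTop t).mul euler).congr' ?_
  filter_upwards
    [(tendsto_atTop_add_const_right _ t tendsto_natCast_atTop_atTop).eventually_gt_atTop 0]
    with m hm
  rw [add_comm t, ← mul_assoc, div_mul_cancel₀ _ hm.ne']

lemma factor_mul_reflectionFactor (x b : ℝ) {k : ℕ} (hk : k ≠ 0) (hb : (k : ℝ) ≠ b) :
    k * (x + k - 1) / ((k - b) * (x + k + b - 1)) * reflectionFactor b k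
      = (x + k - 1) * (b + k - 1) / (k * (x + k + b - 1)) := by
  have hk' : (k : ℝ) ≠ 0 := Nat.cast_ne_zero.mpr hk
  have hb' : (k : ℝ) - b ≠ 0 := sub_ne_zero.mpr hb
  rw [reflectionFactor, div_mul_div_comm, pow_two]
  rw [show (k : ℝ) * (x + k - 1) * ((b + k - 1) * (k - b))
      = ((x + k - 1) * (b + k - 1)) * ((k - b) * k) by ring,
    show (k - b) * (x + k + b - 1) * (k * k) = (k * (x + k + b - 1)) * ((k - b) * k) by ring,
    mul_div_mul_right _ _ (mul_ne_zero hb' hk')]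

theorem joint_factor_symmetry_general (x b : ℝ) (hx1 : x < 1) (hb1 : b < 1)
    (fxb fbx : ℝ)
    (hfxb : Tendsto (fun m : ℕ => ∏ k ∈ Finset.Icc 1 m,
        (k : ℝ) * (x + k - 1) / ((k - b) * (x + k + b - 1))) atTop (nhds fxb))
    (hfbx : Tendsto (fun m : ℕ => ∏ k ∈ Finset.Icc 1 m,
        (k : ℝ) * (b + k - 1) / ((k - x) * (b + k + x - 1))) atTop (nhds fbx)) :
    fxb * Real.sin (Real.pi * b) = fbx * Real.sin (Real.pi * x) := by
  have symm : ∀ m : ℕ,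
      (∏ k ∈ Icc 1 m, (k : ℝ) * (x + k - 1) / ((k - b) * (x + k + b - 1)))
          * (m * ∏ k ∈ Icc 1 m, reflectionFactor b k)
        = (∏ k ∈ Icc 1 m, (k : ℝ) * (b + k - 1) / ((k - x) * (b + k + x - 1)))
          * (m * ∏ k ∈ Icc 1 m, reflectionFactor x k) := by
    intro m
    rw [mul_left_comm, ← prod_mul_distrib, mul_left_comm _ (m : ℝ), ← prod_mul_distrib]
    congr 1
    refine prod_congr rfl fun k hk => ?_
    have hk1 : 1 ≤ k := (mem_Icc.mp hk).1
    have hk1' : (1 : ℝ) ≤ k := by exact_mod_cast hk1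
    rw [factor_mul_reflectionFactor _ _ (by omega) (by linarith),
      factor_mul_reflectionFactor _ _ (by omega) (by linarith)]
    ring_nf
  have hlim := tendsto_nhds_unique
    ((hfxb.mul (tendsto_natCast_mul_prod_reflectionFactor b)).congr symm)
    (hfbx.mul (tendsto_natCast_mul_prod_reflectionFactor x))
  rw [mul_div_assoc', mul_div_assoc', div_left_inj' pi_ne_zero] at hlim
  exact hlim

/-- With `f(x,b) = ∏_{k=1}^∞ k(x+k-1)/((k-b)(x+k+b-1))` for `x, b ∈ (0,1)`,
we have `f(x,b)·sin(πb) = f(b,x)·sin(πx)`. -/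
theorem joint_factor_symmetry (x b : ℝ) (hx0 : 0 < x) (hx1 : x < 1) (hb0 : 0 < b) (hb1 : b < 1)
    (fxb fbx : ℝ)
    (hfxb : Tendsto (fun m : ℕ => ∏ k ∈ Finset.Icc 1 m,
        (k : ℝ) * (x + k - 1) / ((k - b) * (x + k + b - 1))) atTop (nhds fxb))
    (hfbx : Tendsto (fun m : ℕ => ∏ k ∈ Finset.Icc 1 m,
        (k : ℝ) * (b + k - 1) / ((k - x) * (b + k + x - 1))) atTop (nhds fbx)) :
    fxb * Real.sin (Real.pi * b) = fbx * Real.sin (Real.pi * x) :=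
  joint_factor_symmetry_general x b hx1 hb1 fxb fbx hfxb hfbx
end

section
/- Γ(1/4)² = π·(2π)^{1/2}·∏_{k=1}^∞ ((2k-1)/(2k))·((4k-1)/(4k-3)). -/
/-!
Euler's limit formula `Γ(s) = lim n^s n! / (s (s+1) ⋯ (s+n))` shows that, whenever `a + b = c + d`,
the partial products of `∏_j (a+j)(b+j) / ((c+j)(d+j))` are exactly ratios of these approximants,
so the product equals `Γ(c) Γ(d) / (Γ(a) Γ(b))`. The given product is the case
`a, b, c, d = 1/2, 3/4, 1, 1/4`; the reflection formula `Γ(1/4) Γ(3/4) = π √2` and `Γ(1/2) = √π`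
then turn `Γ(1/4) / (Γ(1/2) Γ(3/4))` into `Γ(1/4)² / (π √(2π))`.
-/

open Real Filter Finset
open scoped Nat

namespace Real

theorem GammaSeq_mul_GammaSeq_div_eq_prod {a b c d : ℝ} (h : a + b = c + d) {n : ℕ} (hn : n ≠ 0) :
    GammaSeq c n * GammaSeq d n / (GammaSeq a n * GammaSeq b n) =
      ∏ j ∈ range (n + 1), (a + j) * (b + j) / ((c + j) * (d + j)) := by
  have hn₀ : (0 : ℝ) < n := by positivity
  have hpow : (n : ℝ) ^ c * (n : ℝ) ^ d = (n : ℝ) ^ a * (n : ℝ) ^ b := by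
    rw [← rpow_add hn₀, ← rpow_add hn₀, h]
  have hne : (n : ℝ) ^ a * (n : ℝ) ^ b * ((n ! : ℝ) * n !) ≠ 0 := by positivity
  simp only [GammaSeq, prod_div_distrib, prod_mul_distrib]
  field_simp
  rw [hpow]
  ring

theorem tendsto_prod_div_prod_Gamma {a b c d : ℝ} (h : a + b = c + d)
    (hab : Gamma a * Gamma b ≠ 0) :
    Tendsto (fun n : ℕ => ∏ j ∈ range n, (a + j) * (b + j) / ((c + j) * (d + j))) atTop
      (nhds (Gamma c * Gamma d / (Gamma a * Gamma b))) := by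
  have hSeq := ((GammaSeq_tendsto_Gamma c).mul (GammaSeq_tendsto_Gamma d)).div
    ((GammaSeq_tendsto_Gamma a).mul (GammaSeq_tendsto_Gamma b)) hab
  refine (tendsto_add_atTop_iff_nat 1).mp (hSeq.congr' ?_)
  filter_upwards [eventually_ne_atTop 0] with n hn using GammaSeq_mul_GammaSeq_div_eq_prod h hn

theorem Gamma_one_quarter_mul_Gamma_three_quarters : Gamma (1 / 4) * Gamma (3 / 4) = π * √2 := by
  have h := Gamma_mul_Gamma_one_sub (1 / 4)
  rw [show π * (1 / 4) = π / 4 by ring, sin_pi_div_four] at h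
  norm_num at h
  rw [h]
  field_simp
  exact (sq_sqrt zero_le_two).symm

end Real

theorem prod_Icc_quarter_factors_eq_prod_range (m : ℕ) :
    ∏ k ∈ Icc 1 m, ((2 * (k : ℝ) - 1) / (2 * k)) * ((4 * (k : ℝ) - 1) / (4 * k - 3)) =
      ∏ j ∈ range m, (1 / 2 + (j : ℝ)) * (3 / 4 + j) / ((1 + j) * (1 / 4 + j)) := by
  rw [range_eq_Ico, ← Ico_add_one_right_eq_Icc, show Ico 1 (m + 1) = Ico (0 + 1) (m + 1) from rfl,
    ← prod_Ico_add']
  refine prod_congr rfl fun j _ => ?_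
  push_cast
  rw [show (4 : ℝ) * (j + 1) - 3 = 4 * j + 1 by ring]
  field_simp
  ring

/-- `Γ(1/4)² = π·(2π)^{1/2}·∏_{k=1}^∞ ((2k-1)/(2k))·((4k-1)/(4k-3))`. -/
theorem gamma_quarter_sq (P : ℝ)
    (hP : Tendsto (fun m : ℕ => ∏ k ∈ Finset.Icc 1 m,
        ((2 * (k : ℝ) - 1) / (2 * k)) * ((4 * (k : ℝ) - 1) / (4 * k - 3))) atTop (nhds P)) :
    (Real.Gamma (1/4)) ^ 2 = Real.pi * (2 * Real.pi) ^ ((1 : ℝ)/2) * P := by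
  have hΓ : Gamma (3 / 4) ≠ 0 := (Gamma_pos_of_pos (by norm_num)).ne'
  have hlim := tendsto_prod_div_prod_Gamma (a := 1 / 2) (b := 3 / 4) (c := 1) (d := 1 / 4)
    (by norm_num) (mul_ne_zero (Gamma_pos_of_pos (by norm_num)).ne' hΓ)
  simp only [← prod_Icc_quarter_factors_eq_prod_range] at hlim
  rw [tendsto_nhds_unique hP hlim, Gamma_one, one_mul, Gamma_one_half_eq,
    ← sqrt_eq_rpow, sqrt_mul zero_le_two]
  field_simp
  exact Gamma_one_quarter_mul_Gamma_three_quarters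
end

section
/- For x > 0 and y ∈ (0,1), the Beta function satisfies B(x,y) = (1/y)·∏_{k=1}^∞ k(k-1+x+y)/((k+y)(k-1+x)). -/
/-!
Euler's limit formula `Γ(s) = lim n^s n! / (s (s+1) ⋯ (s+n))` applied to `x`, `y` and `x + y`:
in the quotient `GammaSeq x m * GammaSeq y m / GammaSeq (x+y) m` the powers of `m` cancel, and
what is left is the `m`-th partial product times `y⁻¹` and the correction `(x+y+m)/(x+m)`,
which tends to `1`.
-/

open Real Filter Finset Topology Nat

theorem GammaSeq_mul_GammaSeq_div_GammaSeq_add (x y : ℝ) {m : ℕ} (hm : m ≠ 0) :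
    GammaSeq x m * GammaSeq y m / GammaSeq (x + y) m =
      m ! * (∏ j ∈ range (m + 1), (x + y + j)) /
        ((∏ j ∈ range (m + 1), (x + j)) * ∏ j ∈ range (m + 1), (y + j)) := by
  have hm' : (0 : ℝ) < m := by positivity
  simp only [GammaSeq, rpow_add hm']
  have := (rpow_pos_of_pos hm' x).ne'
  have := (rpow_pos_of_pos hm' y).ne'
  have : (m ! : ℝ) ≠ 0 := by positivity
  field_simp

theorem one_div_mul_prod_Icc_eq {x y : ℝ} (hx : 0 < x) (hy : 0 < y) (m : ℕ) :
    (1 / y) * ∏ k ∈ Icc 1 m, (k : ℝ) * (k - 1 + x + y) / ((k + y) * (k - 1 + x)) =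
      m ! * (∏ j ∈ range (m + 1), (x + y + j)) /
        ((∏ j ∈ range (m + 1), (x + j)) * ∏ j ∈ range (m + 1), (y + j)) *
        ((x + m) / (x + y + m)) := by
  have hshift : ∏ k ∈ Icc 1 m, (k : ℝ) * (k - 1 + x + y) / ((k + y) * (k - 1 + x)) =
      ∏ j ∈ range m, ((j + 1 : ℕ) : ℝ) * (x + y + j) / ((y + (j + 1 : ℕ)) * (x + j)) := by
    rw [← Ico_add_one_right_eq_Icc, prod_Ico_eq_prod_range, add_tsub_cancel_right]
    refine prod_congr rfl fun j _ => ?_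
    push_cast
    ring
  rw [hshift, prod_div_distrib, prod_mul_distrib, prod_mul_distrib,
    ← prod_range_add_one_eq_factorial, prod_range_succ (fun j : ℕ => x + y + j),
    prod_range_succ (fun j : ℕ => x + j), prod_range_succ' (fun j : ℕ => y + j)]
  have hxm : (0 : ℝ) < x + m := by positivity
  have hPx : (0 : ℝ) < ∏ j ∈ range m, (x + j) := prod_pos fun j _ => by positivity
  have hPy : (0 : ℝ) < ∏ j ∈ range m, (y + (j + 1 : ℕ)) := prod_pos fun j _ => by positivity
  push_cast [add_zero]
  field_simp

theorem beta_infinite_product_general (x y : ℝ) (hx : 0 < x) (hy0 : 0 < y) :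
    Tendsto (fun m : ℕ => (1 / y) * ∏ k ∈ Finset.Icc 1 m,
        (k : ℝ) * (k - 1 + x + y) / ((k + y) * (k - 1 + x))) atTop
      (nhds (Real.Gamma x * Real.Gamma y / Real.Gamma (x + y))) := by
  have hGammaSeq : Tendsto (fun m => GammaSeq x m * GammaSeq y m / GammaSeq (x + y) m) atTop
      (𝓝 (Gamma x * Gamma y / Gamma (x + y))) :=
    ((GammaSeq_tendsto_Gamma x).mul (GammaSeq_tendsto_Gamma y)).div
      (GammaSeq_tendsto_Gamma (x + y)) (Gamma_pos_of_pos (add_pos hx hy0)).ne'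
  have hcorrection : Tendsto (fun m : ℕ => (x + 1 * m) / (x + y + 1 * m)) atTop (𝓝 (1 / 1)) :=
    tendsto_add_mul_div_add_mul_atTop_nhds x (x + y) 1 one_ne_zero
  simp only [one_mul, div_one] at hcorrection
  have hlimit := hGammaSeq.mul hcorrection
  rw [mul_one] at hlimit
  refine hlimit.congr' ?_
  filter_upwards [eventually_ne_atTop 0] with m hm
  rw [GammaSeq_mul_GammaSeq_div_GammaSeq_add x y hm, one_div_mul_prod_Icc_eq hx hy0]

/-- For `x > 0` and `y ∈ (0,1)`, the Beta function `B(x,y) = Γ(x)Γ(y)/Γ(x+y)` satisfies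
`B(x,y) = (1/y)·∏_{k=1}^∞ k(k-1+x+y)/((k+y)(k-1+x))`. -/
theorem beta_infinite_product (x y : ℝ) (hx : 0 < x) (hy0 : 0 < y) (hy1 : y < 1) :
    Tendsto (fun m : ℕ => (1 / y) * ∏ k ∈ Finset.Icc 1 m,
        (k : ℝ) * (k - 1 + x + y) / ((k + y) * (k - 1 + x))) atTop
      (nhds (Real.Gamma x * Real.Gamma y / Real.Gamma (x + y))) :=
  beta_infinite_product_general x y hx hy0
end

section
/- For every integer p ≥ 3, Γ(1/p)^p = ((2π)^{p-1}/p)·∏_{k=1}^{p-2} 1/f(1/p, k/p), where f(x,b) = ∏_{j=1}^∞ j(x+j-1)/((j-b)(x+j+b-1)). -/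
open Real Filter Finset
open scoped Topology

/-!
The partial products of `f(x, b)` are ratios of Euler's sequences `GammaSeq`, so
`f(x, b) = Γ(1 - b) Γ(x + b) / Γ(x)`. For `x = 1/p`, `b = k/p` this turns
`∏_{k=1}^{p-2} 1/f(1/p, k/p)` into `Γ(1/p)^(p-2)` divided by two products, each of which is
`∏_{j=2}^{p-1} Γ(j/p)`. It remains to know `(∏_{j=1}^{p-1} Γ(j/p))^2 = (2π)^(p-1)/p`, which
follows from the reflection formula and `∏_{j=1}^{p-1} 2 sin(jπ/p) = p`, the norm of
`∏ (1 - ζ^j) = p` for a primitive `p`-th root of unity `ζ`.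
-/

theorem natCast_add_one_div_lt_one {k n : ℕ} (h : k < n) : ((k : ℝ) + 1) / (n + 1) < 1 :=
  (div_lt_one (by positivity)).2 (by exact_mod_cast Nat.succ_lt_succ h)

theorem prod_range_two_mul_sin_pi_mul_div (n : ℕ) :
    ∏ k ∈ range n, 2 * sin (π * (k + 1) / (n + 1)) = n + 1 := by
  have hζ := Complex.isPrimitiveRoot_exp (n + 1) n.succ_ne_zero
  have h := congrArg norm hζ.prod_one_sub_pow_eq_order
  rw [norm_prod] at h
  have hterm : ∀ k ∈ range n,
      ‖1 - Complex.exp (2 * π * Complex.I / ((n + 1 : ℕ) : ℂ)) ^ (k + 1)‖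
        = 2 * sin (π * (k + 1) / (n + 1)) := by
    intro k hk
    have hsin : 0 < sin (π * (k + 1) / (n + 1)) :=
      sin_pos_of_pos_of_lt_pi (by positivity) (by
        rw [mul_div_assoc]
        exact mul_lt_of_lt_one_right pi_pos (natCast_add_one_div_lt_one (mem_range.1 hk)))
    rw [← Complex.exp_nat_mul, norm_sub_rev,
      show ((k + 1 : ℕ) : ℂ) * (2 * π * Complex.I / ((n + 1 : ℕ) : ℂ))
        = Complex.I * ((2 * (π * (k + 1) / (n + 1)) : ℝ) : ℂ) by push_cast; ring,
      Complex.norm_exp_I_mul_ofReal_sub_one, mul_div_cancel_left₀ _ two_ne_zero,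
      norm_of_nonneg (by positivity)]
  rw [prod_congr rfl hterm] at h
  exact_mod_cast h

theorem prod_range_comp_one_sub_div {M : Type*} [CommMonoid M] (f : ℝ → M) (n : ℕ) :
    ∏ k ∈ range n, f (1 - (k + 1) / (n + 1)) = ∏ k ∈ range n, f ((k + 1) / (n + 1)) := by
  rw [← prod_range_reflect]
  refine prod_congr rfl fun k hk => congrArg f ?_
  rw [show n - 1 - k = n - (k + 1) by omega, Nat.cast_sub (by simp at hk; omega)]
  field_simp
  push_cast
  ring

theorem sq_prod_range_Gamma_div (n : ℕ) :
    (∏ k ∈ range n, Gamma ((k + 1) / (n + 1))) ^ 2 = (2 * π) ^ n / (n + 1) := by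
  have hpair : ∀ k ∈ range n, Gamma ((k + 1) / (n + 1)) * Gamma (1 - (k + 1) / (n + 1))
      = 2 * π / (2 * sin (π * (k + 1) / (n + 1))) := fun k _ => by
    rw [Gamma_mul_Gamma_one_sub, mul_div_mul_left _ _ two_ne_zero, mul_div_assoc]
  rw [sq]
  nth_rw 2 [← prod_range_comp_one_sub_div]
  rw [← prod_mul_distrib, prod_congr rfl hpair, prod_div_distrib, prod_const, card_range,
    prod_range_two_mul_sin_pi_mul_div]

theorem GammaSeq_mul_GammaSeq_div_eq_prod_range {a b c d : ℝ} (habcd : a + b = c + d) (ha : 0 < a)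
    (hb : 0 < b) (hc : 0 < c) (hd : 0 < d) {m : ℕ} (hm : m ≠ 0) :
    GammaSeq c m * GammaSeq d m / (GammaSeq a m * GammaSeq b m)
      = ∏ j ∈ range (m + 1), (a + j) * (b + j) / ((c + j) * (d + j)) := by
  have hm : (0 : ℝ) < m := by positivity
  have hpow : (m : ℝ) ^ c * (m : ℝ) ^ d = (m : ℝ) ^ a * (m : ℝ) ^ b := by
    rw [← rpow_add hm, ← rpow_add hm, habcd]
  have hprod : ∀ s : ℝ, 0 < s → ∏ j ∈ range (m + 1), (s + j) ≠ 0 := fun s hs =>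
    (prod_pos fun j _ => by positivity).ne'
  simp only [GammaSeq, prod_div_distrib, prod_mul_distrib]
  field_simp [hprod a ha, hprod b hb, hprod c hc, hprod d hd]
  rw [hpow]

theorem tendsto_prod_range_mul_div_mul_Gamma {a b c d : ℝ} (habcd : a + b = c + d) (ha : 0 < a)
    (hb : 0 < b) (hc : 0 < c) (hd : 0 < d) :
    Tendsto (fun m : ℕ => ∏ j ∈ range m, (a + j) * (b + j) / ((c + j) * (d + j))) atTop
      (𝓝 (Gamma c * Gamma d / (Gamma a * Gamma b))) := by
  rw [← tendsto_add_atTop_iff_nat 1]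
  refine (((GammaSeq_tendsto_Gamma c).mul (GammaSeq_tendsto_Gamma d)).div
    ((GammaSeq_tendsto_Gamma a).mul (GammaSeq_tendsto_Gamma b))
    (mul_pos (Gamma_pos_of_pos ha) (Gamma_pos_of_pos hb)).ne').congr' ?_
  filter_upwards [eventually_ne_atTop 0] with m hm
  exact GammaSeq_mul_GammaSeq_div_eq_prod_range habcd ha hb hc hd hm

theorem tendsto_prod_Icc_mul_div_mul_Gamma {x b : ℝ} (hx : 0 < x) (hb : b < 1) (hxb : 0 < x + b) :
    Tendsto
      (fun m : ℕ => ∏ j ∈ Icc 1 m, (j : ℝ) * (x + j - 1) / ((j - b) * (x + j + b - 1)))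
      atTop (𝓝 (Gamma (1 - b) * Gamma (x + b) / Gamma x)) := by
  have h := tendsto_prod_range_mul_div_mul_Gamma (a := 1) (b := x) (c := 1 - b) (d := x + b)
    (by ring) one_pos hx (by linarith) hxb
  rw [Gamma_one, one_mul] at h
  refine h.congr fun m => ?_
  rw [← Ico_add_one_right_eq_Icc, prod_Ico_eq_prod_range, Nat.add_sub_cancel]
  refine prod_congr rfl fun j _ => ?_
  push_cast
  ring_nf

theorem Gamma_one_div_pow_eq_prod (n : ℕ) :
    Gamma (1 / (n + 1 + 1)) ^ (n + 1 + 1) = (2 * π) ^ (n + 1) / (n + 1 + 1) *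
      ∏ k ∈ range n, Gamma (1 / (n + 1 + 1)) /
        (Gamma (1 - (k + 1) / (n + 1 + 1)) * Gamma ((k + 1 + 1) / (n + 1 + 1))) := by
  set G := Gamma (1 / (n + 1 + 1))
  set A := ∏ k ∈ range n, Gamma (1 - (k + 1) / (n + 1 + 1))
  set B := ∏ k ∈ range n, Gamma ((k + 1 + 1) / (n + 1 + 1))
  have hA : A ≠ 0 := (prod_pos fun k hk => Gamma_pos_of_pos (sub_pos.2 (by
    exact_mod_cast natCast_add_one_div_lt_one (by simp at hk; omega : k < n + 1)))).ne'
  have hB : B ≠ 0 := (prod_pos fun k _ => Gamma_pos_of_pos (by positivity)).ne'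
  have hAG : A * G = ∏ k ∈ range (n + 1), Gamma ((k + 1) / (n + 1 + 1)) := by
    have h := prod_range_comp_one_sub_div Gamma (n + 1)
    push_cast at h
    rw [← h, prod_range_succ,
      show (1 : ℝ) - (n + 1) / (n + 1 + 1) = 1 / (n + 1 + 1) by field_simp; ring]
  have hGB : G * B = ∏ k ∈ range (n + 1), Gamma ((k + 1) / (n + 1 + 1)) := by
    rw [prod_range_succ', mul_comm]
    push_cast [zero_add]
    rfl
  have hP := sq_prod_range_Gamma_div (n + 1)
  push_cast at hP
  rw [prod_div_distrib, prod_const, card_range, prod_mul_distrib]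
  change G ^ (n + 1 + 1) = _ * (G ^ n / (A * B))
  rw [← hP, sq]
  nth_rw 1 [← hAG]
  rw [← hGB]
  field_simp
  ring

/-- For every integer `p ≥ 3`,
`Γ(1/p)^p = ((2π)^{p-1}/p)·∏_{k=1}^{p-2} 1/f(1/p, k/p)` where
`f(x,b) = ∏_{j=1}^∞ j(x+j-1)/((j-b)(x+j+b-1))`. -/
theorem gamma_recip_p_pow (p : ℕ) (hp : 3 ≤ p) (F : ℕ → ℝ)
    (hF : ∀ k ∈ Finset.Icc 1 (p - 2),
      Tendsto (fun m : ℕ => ∏ j ∈ Finset.Icc 1 m,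
          (j : ℝ) * ((1 : ℝ)/p + j - 1) / ((j - (k : ℝ)/p) * ((1 : ℝ)/p + j + (k : ℝ)/p - 1)))
        atTop (nhds (F k))) :
    (Real.Gamma (1/p)) ^ p = (2 * Real.pi) ^ (p - 1) / p *
      ∏ k ∈ Finset.Icc 1 (p - 2), 1 / F k := by
  obtain ⟨n, rfl⟩ : ∃ n, p = n + 1 + 1 := ⟨p - 2, by omega⟩
  simp only [Nat.add_sub_cancel] at hF ⊢
  push_cast at hF ⊢
  rw [Gamma_one_div_pow_eq_prod, ← Ico_add_one_right_eq_Icc, prod_Ico_eq_prod_range,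
    Nat.add_sub_cancel]
  refine congrArg _ (prod_congr rfl fun k hk => ?_)
  have hkn : k < n := mem_range.1 hk
  have hb : (k + 1 : ℝ) / (n + 1 + 1) < 1 := by
    exact_mod_cast natCast_add_one_div_lt_one (by omega : k < n + 1)
  have hlim := tendsto_prod_Icc_mul_div_mul_Gamma (x := 1 / (n + 1 + 1))
    (b := (k + 1) / (n + 1 + 1)) (by positivity) hb (by positivity)
  have hFk := hF (k + 1) (by simp; omega)
  push_cast at hFk
  rw [add_comm 1 k, tendsto_nhds_unique hFk hlim, one_div_div]
  congr 3
  ring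
end

section
/- For all real x, sin(πx) = ∏_{k=1}^∞ (2/(2k-1))²·(k-x)(k-1+x), in the sense that the partial products converge to sin(πx) for 0 < x < 1. -/
/-!
Put `y = x - 1/2`. The `k`-th factor is `1 - (2y)² / (2k - 1)²`, so the partial products are
those of Euler's product for `cos (π y) = sin (π x)`. Splitting the partial product of Euler's sine
product for `sin (2π y)` into odd and even indices gives `2 · (sine partial product at y) · (cosine
partial product)`, and comparing with `sin (2π y) = 2 sin (π y) cos (π y)` identifies the limit
whenever `sin (π y) ≠ 0`; the remaining case `x = 1/2` is a product of ones.
-/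

open Real Filter Finset Topology

theorem Finset.prod_range_two_mul {M : Type*} [CommMonoid M] (f : ℕ → M) (m : ℕ) :
    ∏ j ∈ range (2 * m), f j = ∏ i ∈ range m, f (2 * i) * f (2 * i + 1) := by
  induction m with
  | zero => simp
  | succ m ih => rw [mul_add_one, prod_range_succ, prod_range_succ, ih, prod_range_succ, mul_assoc]

namespace Real

lemma prod_one_sub_two_mul_sq_div_succ_sq (y : ℝ) (m : ℕ) :
    ∏ j ∈ range (2 * m), (1 - (2 * y) ^ 2 / ((j : ℝ) + 1) ^ 2) =
      (∏ k ∈ range m, (1 - (2 * y) ^ 2 / (2 * (k : ℝ) + 1) ^ 2)) *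
        ∏ j ∈ range m, (1 - y ^ 2 / ((j : ℝ) + 1) ^ 2) := by
  rw [prod_range_two_mul, ← prod_mul_distrib]
  refine prod_congr rfl fun k _ => ?_
  push_cast
  congr 2
  field_simp
  ring

theorem tendsto_euler_cos_prod {y : ℝ} (hy : sin (π * y) ≠ 0) :
    Tendsto (fun m : ℕ => ∏ k ∈ range m, (1 - (2 * y) ^ 2 / (2 * (k : ℝ) + 1) ^ 2)) atTop
      (𝓝 (cos (π * y))) := by
  have hsin := tendsto_euler_sin_prod y
  have hquot := ((tendsto_euler_sin_prod (2 * y)).comp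
    (tendsto_id.const_mul_atTop' two_pos)).div hsin hy
  have hlim : sin (π * (2 * y)) / sin (π * y) / 2 = cos (π * y) := by
    rw [mul_left_comm, sin_two_mul]
    field_simp
  rw [← hlim]
  refine (hquot.div_const 2).congr' ?_
  filter_upwards [hsin.eventually_ne hy] with m hm
  rw [Pi.div_apply, Function.comp_apply, id, prod_one_sub_two_mul_sq_div_succ_sq,
    show ∀ a b c d : ℝ, a * (2 * b) * (c * d) = 2 * c * (a * b * d) by intros; ring,
    mul_div_cancel_right₀ _ hm, mul_div_cancel_left₀ _ two_ne_zero]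

end Real

/-- For `0 < x < 1`, the partial products of
`∏_{k=1}^∞ (2/(2k-1))²·(k-x)(k-1+x)` converge to `sin(πx)`. -/
theorem sin_pi_infinite_product (x : ℝ) (hx0 : 0 < x) (hx1 : x < 1) :
    Tendsto (fun m : ℕ => ∏ k ∈ Finset.Icc 1 m,
        (2 / (2 * (k : ℝ) - 1)) ^ 2 * ((k - x) * (k - 1 + x))) atTop
      (nhds (Real.sin (Real.pi * x))) := by
  have hprod (m : ℕ) : ∏ k ∈ Icc 1 m, (2 / (2 * (k : ℝ) - 1)) ^ 2 * ((k - x) * (k - 1 + x)) =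
      ∏ j ∈ range m, (1 - (2 * (x - 1 / 2)) ^ 2 / (2 * (j : ℝ) + 1) ^ 2) := by
    rw [← Ico_add_one_right_eq_Icc, prod_Ico_eq_prod_range, Nat.add_sub_cancel]
    refine prod_congr rfl fun j _ => ?_
    have hodd : 2 * ((1 + j : ℕ) : ℝ) - 1 = 2 * j + 1 := by push_cast; ring
    have hodd_pos : 0 < 2 * (j : ℝ) + 1 := by positivity
    rw [hodd]
    field_simp
    push_cast
    ring
  have hcos : cos (π * (x - 1 / 2)) = sin (π * x) := by
    rw [← cos_pi_div_two_sub, ← cos_neg]; ring_nf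
  simp only [hprod, ← hcos]
  rcases eq_or_ne x (1 / 2) with rfl | hx
  · simp
  refine tendsto_euler_cos_prod ?_
  rw [Ne, sin_eq_zero_iff_of_lt_of_lt (by nlinarith [pi_pos]) (by nlinarith [pi_pos])]
  exact mul_ne_zero pi_ne_zero (sub_ne_zero.mpr hx)
end

section
/- For 0 < x < 1, 0 < y < 1, and every positive integer m, B(x,y) > (1/y)·∏_{k=1}^m k(k-1+x+y)/((k-1+x)(k+y)). -/
/-!
Since `∏_{k=1}^m (k - 1 + s) = Γ(m + s) / Γ(s)`, the `m`-th partial product equals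
`y B(x,y) · Γ(m+1) Γ(m+x+y) / (Γ(m+x) Γ(m+1+y))`. The points `m + 1` and `m + x + y` lie between
`m + x` and `m + 1 + y` and have the same sum, so log-convexity of `Γ` bounds the Gamma quotient
by `1`: every partial product is at most `y B(x,y)`. Strictness comes from the partial products
increasing strictly, each new factor exceeding `1` when `x < 1`.
-/

open Real Finset

theorem ConvexOn.map_add_map_le_of_add_eq {s : Set ℝ} {f : ℝ → ℝ} (hf : ConvexOn ℝ s f)
    {a b u v : ℝ} (ha : a ∈ s) (hb : b ∈ s) (hau : a ≤ u) (hub : u ≤ b) (huv : u + v = a + b) :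
    f u + f v ≤ f a + f b := by
  rcases (hau.trans hub).eq_or_lt with rfl | hab
  · obtain rfl : u = a := le_antisymm hub hau
    obtain rfl : v = u := by linarith
    rfl
  set θ := (b - u) / (b - a)
  have hθ : θ * (b - a) = b - u := div_mul_cancel₀ _ (sub_ne_zero.2 hab.ne')
  have hθ0 : 0 ≤ θ := div_nonneg (by linarith) (by linarith)
  have hθ1 : θ ≤ 1 := div_le_one_of_le₀ (by linarith) (by linarith)
  have hu := hf.2 ha hb hθ0 (sub_nonneg.2 hθ1) (add_sub_cancel θ 1)
  have hv := hf.2 ha hb (sub_nonneg.2 hθ1) hθ0 (sub_add_cancel 1 θ)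
  simp only [smul_eq_mul] at hu hv
  rw [show θ * a + (1 - θ) * b = u by linarith] at hu
  rw [show (1 - θ) * a + θ * b = v by linarith] at hv
  linarith

namespace Real

theorem Gamma_mul_Gamma_le_of_add_eq {a b u v : ℝ} (ha : 0 < a) (hau : a ≤ u) (hub : u ≤ b)
    (huv : u + v = a + b) : Gamma u * Gamma v ≤ Gamma a * Gamma b := by
  have hpos : ∀ {t}, a ≤ t → 0 < Gamma t := fun ht => Gamma_pos_of_pos (ha.trans_le ht)
  have hu := hpos hau
  have hv := hpos (show a ≤ v by linarith)
  have ha' := hpos le_rfl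
  have hb := hpos (hau.trans hub)
  have hlog := convexOn_log_Gamma.map_add_map_le_of_add_eq (Set.mem_Ioi.2 ha)
    (Set.mem_Ioi.2 (ha.trans_le (hau.trans hub))) hau hub huv
  simp only [Function.comp_apply] at hlog
  rwa [← log_le_log_iff (by positivity) (by positivity), log_mul hu.ne' hv.ne',
    log_mul ha'.ne' hb.ne']

theorem prod_Icc_sub_one_add_mul_Gamma {s : ℝ} (hs : 0 < s) (m : ℕ) :
    (∏ k ∈ Icc 1 m, ((k : ℝ) - 1 + s)) * Gamma s = Gamma (m + s) := by
  induction m with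
  | zero => simp
  | succ n ih =>
    rw [prod_Icc_succ_top (Nat.le_add_left 1 n), mul_right_comm, ih, Nat.cast_succ,
      show (n : ℝ) + 1 + s = n + s + 1 by ring, Gamma_add_one (by positivity)]
    ring

end Real

noncomputable def betaPartialProd (x y : ℝ) (m : ℕ) : ℝ :=
  ∏ k ∈ Icc 1 m, (k : ℝ) * (k - 1 + x + y) / ((k - 1 + x) * (k + y))

section betaPartialProd

variable {x y : ℝ}

theorem betaPartialProd_eq (hx : 0 < x) (hy : 0 < y) (m : ℕ) :
    betaPartialProd x y m = y * (Gamma x * Gamma y / Gamma (x + y)) *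
      (Gamma (m + 1) * Gamma (m + (x + y)) / (Gamma (m + x) * Gamma (m + (1 + y)))) := by
  have hprod : ∀ {s : ℝ}, 0 < s → ∏ k ∈ Icc 1 m, ((k : ℝ) - 1 + s) = Gamma (m + s) / Gamma s :=
    fun hs => eq_div_of_mul_eq (Gamma_pos_of_pos hs).ne' (prod_Icc_sub_one_add_mul_Gamma hs m)
  have hfactor : ∀ k : ℕ, (k : ℝ) * (k - 1 + x + y) / ((k - 1 + x) * (k + y)) =
      ((k - 1 + 1) * (k - 1 + (x + y))) / ((k - 1 + x) * (k - 1 + (1 + y))) := fun k => by ring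
  simp only [betaPartialProd, hfactor, prod_div_distrib, prod_mul_distrib]
  rw [hprod one_pos, hprod (add_pos hx hy), hprod hx, hprod (add_pos one_pos hy), Gamma_one,
    add_comm 1 y, Gamma_add_one hy.ne', add_comm y 1]
  field_simp

theorem betaPartialProd_le (hx0 : 0 < x) (hx1 : x ≤ 1) (hy : 0 < y) (m : ℕ) :
    betaPartialProd x y m ≤ y * (Gamma x * Gamma y / Gamma (x + y)) := by
  have hratio : Gamma (m + 1) * Gamma (m + (x + y)) ≤ Gamma (m + x) * Gamma (m + (1 + y)) :=
    Gamma_mul_Gamma_le_of_add_eq (by positivity) (by linarith) (by linarith) (by ring)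
  rw [betaPartialProd_eq hx0 hy]
  exact mul_le_of_le_one_right (by positivity) (div_le_one_of_le₀ hratio (by positivity))

theorem betaPartialProd_pos (hx : 0 < x) (hy : 0 < y) (m : ℕ) : 0 < betaPartialProd x y m :=
  prod_pos fun k hk => by
    have : (1 : ℝ) ≤ k := Nat.one_le_cast.2 (mem_Icc.1 hk).1
    apply div_pos <;> apply mul_pos <;> linarith

theorem betaPartialProd_lt_succ (hx0 : 0 < x) (hx1 : x < 1) (hy : 0 < y) (m : ℕ) :
    betaPartialProd x y m < betaPartialProd x y (m + 1) := by
  have hden : 0 < ((m : ℝ) + x) * (m + 1 + y) := by positivity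
  -- the last factor exceeds `1` because its numerator minus its denominator is `y (1 - x)`
  have hfactor : 1 < ((m : ℝ) + 1) * (m + x + y) / ((m + x) * (m + 1 + y)) := by
    rw [one_lt_div hden]; nlinarith
  unfold betaPartialProd
  rw [prod_Icc_succ_top (Nat.le_add_left 1 m)]
  push_cast
  rw [show (m : ℝ) + 1 - 1 = m by ring]
  exact lt_mul_of_one_lt_right (betaPartialProd_pos hx0 hy m) hfactor

end betaPartialProd

theorem beta_gt_truncation_general (x y : ℝ) (hx0 : 0 < x) (hx1 : x < 1) (hy0 : 0 < y)
    (m : ℕ) :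
    Real.Gamma x * Real.Gamma y / Real.Gamma (x + y) >
      (1 / y) * ∏ k ∈ Finset.Icc 1 m,
        (k : ℝ) * (k - 1 + x + y) / ((k - 1 + x) * (k + y)) := by
  rw [gt_iff_lt, one_div_mul_eq_div, div_lt_iff₀' hy0]
  exact (betaPartialProd_lt_succ hx0 hx1 hy0 m).trans_le
    (betaPartialProd_le hx0 hx1.le hy0 (m + 1))

/-- For `0 < x < 1`, `0 < y < 1` and every positive integer `m`,
`B(x,y) > (1/y)·∏_{k=1}^m k(k-1+x+y)/((k-1+x)(k+y))`. -/
theorem beta_gt_truncation (x y : ℝ) (hx0 : 0 < x) (hx1 : x < 1) (hy0 : 0 < y) (hy1 : y < 1)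
    (m : ℕ) (hm : 1 ≤ m) :
    Real.Gamma x * Real.Gamma y / Real.Gamma (x + y) >
      (1 / y) * ∏ k ∈ Finset.Icc 1 m,
        (k : ℝ) * (k - 1 + x + y) / ((k - 1 + x) * (k + y)) :=
  beta_gt_truncation_general x y hx0 hx1 hy0 m
end

section
/- Let Ω_n = π^{n/2}/Γ(1+n/2) be the volume of the unit ball in ℝ^n. Then for every positive integer n, Ω_{n-1}/Ω_n = n/(2·f(n/2,1/2)), where f(x,1/2) = ∏_{k=1}^∞ k(x+k-1)/((k-1/2)(x+k-1/2)). -/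
open Real Filter Finset

/-! With `x = n/2`, the `m`-th partial product of `f(x,1/2)` is the ratio
`Γₘ(1/2) Γₘ(x+1/2) / (Γₘ(1) Γₘ(x))` of Euler's approximants `Γₘ(s) = mˢ m! / ∏_{j ≤ m} (s+j)`:
the factorials cancel, and so do the powers of `m` because `1/2 + (x+1/2) = 1 + x`. Hence
`f(x,1/2) = √π Γ(x+1/2) / Γ(x)`, while `Ω_{n-1}/Ω_n = Γ(1+x) / (√π Γ(x+1/2))` and
`Γ(1+x) = x Γ(x)`. -/

lemma prod_Icc_eq_prod_range_succ {M : Type*} [CommMonoid M] (f : ℕ → M) (m : ℕ) :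
    ∏ k ∈ Icc 1 m, f k = ∏ j ∈ range m, f (j + 1) := by
  rw [range_eq_Ico, prod_Ico_add' f 0 m 1]; rfl

lemma prod_Icc_eq_GammaSeq_ratio {x : ℝ} (hx : 0 < x) {m : ℕ} (hm : m ≠ 0) :
    ∏ k ∈ Icc 1 (m + 1), (k : ℝ) * (x + k - 1) / ((k - 1/2) * (x + k - 1/2)) =
      GammaSeq (1/2) m * GammaSeq (x + 1/2) m / (GammaSeq 1 m * GammaSeq x m) := by
  have hprod_ne : ∀ s : ℝ, 0 < s → ∏ j ∈ range (m + 1), (s + j) ≠ 0 := fun s hs =>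
    (prod_pos fun j _ => by positivity).ne'
  have hterm : ∀ j : ℕ, ((j + 1 : ℕ) : ℝ) * (x + (j + 1 : ℕ) - 1) /
      ((((j + 1 : ℕ) : ℝ) - 1/2) * (x + (j + 1 : ℕ) - 1/2)) =
      (1 + j) * (x + j) / ((1/2 + j) * (x + 1/2 + j)) := fun j => by push_cast; ring
  rw [prod_Icc_eq_prod_range_succ]
  simp only [GammaSeq, hterm, prod_div_distrib, prod_mul_distrib]
  field_simp [hprod_ne _ one_pos, hprod_ne x hx, hprod_ne (1/2) one_half_pos,
    hprod_ne (x + 1/2) (by positivity)]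
  have hm_pos : (0 : ℝ) < m := by positivity
  rw [← rpow_add hm_pos, ← rpow_add hm_pos]
  ring_nf

lemma tendsto_prod_Icc_one_half {x : ℝ} (hx : 0 < x) :
    Tendsto (fun m : ℕ => ∏ k ∈ Icc 1 m, (k : ℝ) * (x + k - 1) / ((k - 1/2) * (x + k - 1/2)))
      atTop (nhds (√π * Gamma (x + 1/2) / Gamma x)) := by
  rw [← tendsto_add_atTop_iff_nat 1]
  have hlim := ((GammaSeq_tendsto_Gamma (1/2)).mul (GammaSeq_tendsto_Gamma (x + 1/2))).div
    ((GammaSeq_tendsto_Gamma 1).mul (GammaSeq_tendsto_Gamma x))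
    (by rw [Gamma_one, one_mul]; exact (Gamma_pos_of_pos hx).ne')
  rw [Gamma_one_half_eq, Gamma_one, one_mul] at hlim
  refine hlim.congr' ?_
  filter_upwards [eventually_ne_atTop 0] with m hm
  exact (prod_Icc_eq_GammaSeq_ratio hx hm).symm

lemma pi_rpow_div_Gamma_sub_one_half_div (s : ℝ) :
    (π ^ (s - 1/2) / Gamma (1 + (s - 1/2))) / (π ^ s / Gamma (1 + s)) =
      Gamma (1 + s) / (√π * Gamma (s + 1/2)) := by
  rw [show 1 + (s - 1/2) = s + 1/2 by ring, rpow_sub pi_pos, ← sqrt_eq_rpow, div_div (π ^ s),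
    div_div_div_cancel_left' _ _ (rpow_pos_of_pos pi_pos s).ne']

/-- With `Ω_n = π^{n/2}/Γ(1+n/2)` the volume of the unit ball in `ℝⁿ`, for every positive
integer `n`, `Ω_{n-1}/Ω_n = n/(2·f(n/2,1/2))` where
`f(x,1/2) = ∏_{k=1}^∞ k(x+k-1)/((k-1/2)(x+k-1/2))`. -/
theorem unit_ball_volume_ratio (n : ℕ) (hn : 1 ≤ n) (f : ℝ)
    (hf : Tendsto (fun m : ℕ => ∏ k ∈ Finset.Icc 1 m,
        (k : ℝ) * ((n : ℝ)/2 + k - 1) / ((k - 1/2) * ((n : ℝ)/2 + k - 1/2))) atTop (nhds f)) :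
    (Real.pi ^ (((n : ℝ) - 1)/2) / Real.Gamma (1 + ((n : ℝ) - 1)/2)) /
      (Real.pi ^ ((n : ℝ)/2) / Real.Gamma (1 + (n : ℝ)/2)) = n / (2 * f) := by
  have hx : (0 : ℝ) < n / 2 := by positivity
  obtain rfl := tendsto_nhds_unique hf (tendsto_prod_Icc_one_half hx)
  rw [sub_div, pi_rpow_div_Gamma_sub_one_half_div, add_comm, Gamma_add_one hx.ne']
  field_simp
end

section
/- Let I_α = ∫_0^{π/2} (sin θ)^α dθ. Then for α > 0, I_α = (1/α)·∏_{k=1}^∞ k(α/2+k-1)/((k-1/2)(α/2+k-1/2)). -/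
/-!
Write `J β = ∫₀^{π/2} sin^β θ dθ`. Integration by parts gives `(β + 2) J (β + 2) = (β + 1) J β`,
so with `h β = β J β` the product `∏_{j<m} (β + 2j) / (β + 2j + 1) = h β / h (β + 2m)` telescopes.
The `k`-th Wallis factor is the quotient of the `(k - 1)`-th factors of this product at `β = α`
and at `β = 1`; as `h 1 = 1`, the `m`-th partial product divided by `α` equals
`J α · h (2m + 1) / h (2m + α)`. Since `J` decreases,
`(x + 1) / (x + 2) = J (x + 2) / J x ≤ J (x + s) / J x ≤ 1` for `s ∈ [0, 2]`, so
`J (x + s) / J x → 1` for every `s ≥ 0` and the last quotient tends to `1`.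
-/

open Real Filter Finset intervalIntegral Set Topology

noncomputable def sinPowIntegral (β : ℝ) : ℝ := ∫ θ in (0 : ℝ)..(π / 2), sin θ ^ β

lemma intervalIntegrable_sin_rpow {β : ℝ} (hβ : 0 ≤ β) (a b : ℝ) :
    IntervalIntegrable (fun θ => sin θ ^ β) MeasureTheory.volume a b :=
  ((continuous_rpow_const hβ).comp continuous_sin).intervalIntegrable a b

lemma sinPowIntegral_pos {β : ℝ} (hβ : 0 ≤ β) : 0 < sinPowIntegral β :=
  intervalIntegral_pos_of_pos_on (intervalIntegrable_sin_rpow hβ _ _)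
    (fun _ hθ => rpow_pos_of_pos (sin_pos_of_pos_of_lt_pi hθ.1 (by linarith [hθ.2, pi_pos])) β)
    (by positivity)

lemma sinPowIntegral_antitoneOn : AntitoneOn sinPowIntegral (Ici 0) := by
  intro β hβ γ hγ hβγ
  refine integral_mono_on (by positivity) (intervalIntegrable_sin_rpow hγ _ _)
    (intervalIntegrable_sin_rpow hβ _ _) fun θ hθ => ?_
  have hsin := sin_nonneg_of_nonneg_of_le_pi hθ.1 (by linarith [hθ.2, pi_pos])
  exact rpow_le_rpow_of_exponent_ge' hsin (sin_le_one θ) hβ hβγ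

lemma sinPowIntegral_one : sinPowIntegral 1 = 1 := by
  simp [sinPowIntegral]

lemma hasDerivAt_cos_mul_sin_rpow_add_one {β : ℝ} (hβ : 0 ≤ β) {θ : ℝ} (hθ : 0 ≤ sin θ) :
    HasDerivAt (fun x => cos x * sin x ^ (β + 1))
      ((β + 1) * sin θ ^ β - (β + 2) * sin θ ^ (β + 2)) θ := by
  have hrpow : HasDerivAt (fun y : ℝ => y ^ (β + 1)) ((β + 1) * sin θ ^ β) (sin θ) := by
    simpa using hasDerivAt_rpow_const (x := sin θ) (p := β + 1) (Or.inr (by linarith))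
  refine ((hasDerivAt_cos θ).mul (hrpow.comp θ (hasDerivAt_sin θ))).congr_deriv ?_
  have h1 : sin θ ^ (β + 1) = sin θ ^ β * sin θ := by
    simpa using rpow_add_natCast' hθ (y := β) (n := 1) (by positivity)
  have h2 : sin θ ^ (β + 2) = sin θ ^ β * sin θ ^ 2 := by
    simpa using rpow_add_natCast' hθ (y := β) (n := 2) (by positivity)
  rw [Function.comp_apply, h1, h2]
  linear_combination (β + 1) * sin θ ^ β * sin_sq_add_cos_sq θ

lemma sinPowIntegral_add_two {β : ℝ} (hβ : 0 ≤ β) :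
    (β + 2) * sinPowIntegral (β + 2) = (β + 1) * sinPowIntegral β := by
  have hint (γ : ℝ) (hγ : 0 ≤ γ) (c : ℝ) :=
    (intervalIntegrable_sin_rpow hγ 0 (π / 2)).const_mul c
  have hderiv : ∀ θ ∈ uIcc 0 (π / 2), HasDerivAt (fun x => cos x * sin x ^ (β + 1))
      ((β + 1) * sin θ ^ β - (β + 2) * sin θ ^ (β + 2)) θ := fun θ hθ => by
    rw [Set.uIcc_of_le (by positivity)] at hθ
    exact hasDerivAt_cos_mul_sin_rpow_add_one hβ
      (sin_nonneg_of_nonneg_of_le_pi hθ.1 (by linarith [hθ.2, pi_pos]))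
  have hftc := integral_eq_sub_of_hasDerivAt hderiv
    ((hint β hβ _).sub (hint (β + 2) (by positivity) _))
  rw [integral_sub (hint β hβ _) (hint (β + 2) (by positivity) _), integral_const_mul,
    integral_const_mul, cos_pi_div_two, sin_zero, zero_rpow (by positivity)] at hftc
  simp only [sinPowIntegral]
  linarith

lemma prod_range_div_eq_sinPowIntegral {β : ℝ} (hβ : 0 < β) (m : ℕ) :
    ∏ j ∈ range m, (β + 2 * j) / (β + 2 * j + 1) =
      β * sinPowIntegral β / ((β + 2 * m) * sinPowIntegral (β + 2 * m)) := by
  induction m with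
  | zero => simp [(sinPowIntegral_pos hβ.le).ne', hβ.ne']
  | succ m ih =>
    have hrec := sinPowIntegral_add_two (β := β + 2 * m) (by positivity)
    have hJ := sinPowIntegral_pos (β := β + 2 * m) (by positivity)
    rw [prod_range_succ, ih, Nat.cast_succ, show β + 2 * (m + 1 : ℝ) = β + 2 * m + 2 by ring,
      hrec]
    field_simp

lemma tendsto_sinPowIntegral_add_div_of_le_two {s : ℝ} (hs₀ : 0 ≤ s) (hs₂ : s ≤ 2) :
    Tendsto (fun x => sinPowIntegral (x + s) / sinPowIntegral x) atTop (𝓝 1) := by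
  have hlower : Tendsto (fun x : ℝ => 1 - 1 / (x + 2)) atTop (𝓝 1) := by
    simpa using (tendsto_const_nhds (x := (1 : ℝ))).sub
      ((tendsto_const_nhds (x := (1 : ℝ))).div_atTop
        (tendsto_atTop_add_const_right atTop (2 : ℝ) tendsto_id))
  refine tendsto_of_tendsto_of_tendsto_of_le_of_le' hlower tendsto_const_nhds ?_ ?_
  all_goals filter_upwards [eventually_ge_atTop 0] with x hx
  all_goals have hJ := sinPowIntegral_pos hx
  · have hrec := sinPowIntegral_add_two hx
    have hmono := sinPowIntegral_antitoneOn (a := x + s) (b := x + 2) (by simp; positivity)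
      (by simp; positivity) (by linarith)
    rw [le_div_iff₀ hJ]
    have hlower_eq : (1 - 1 / (x + 2)) * sinPowIntegral x = sinPowIntegral (x + 2) := by
      field_simp; linarith
    linarith
  · rw [div_le_one hJ]
    exact sinPowIntegral_antitoneOn (by simpa using hx) (by simp; positivity) (by linarith)

lemma tendsto_sinPowIntegral_add_div {s : ℝ} (hs : 0 ≤ s) :
    Tendsto (fun x => sinPowIntegral (x + s) / sinPowIntegral x) atTop (𝓝 1) := by
  obtain ⟨N, hN⟩ := exists_nat_ge (s / 2)
  induction N generalizing s with
  | zero => exact tendsto_sinPowIntegral_add_div_of_le_two hs (by simp at hN; linarith)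
  | succ N ih =>
    rcases le_total s 2 with hs₂ | hs₂
    · exact tendsto_sinPowIntegral_add_div_of_le_two hs hs₂
    have hshift := (ih (s := s - 2) (by linarith) (by push_cast at hN; linarith)).comp
      (tendsto_atTop_add_const_right _ 2 tendsto_id)
    have hprod := hshift.mul (tendsto_sinPowIntegral_add_div_of_le_two zero_le_two le_rfl)
    rw [mul_one] at hprod
    refine hprod.congr' ?_
    filter_upwards [eventually_ge_atTop 0] with x hx
    have hJ := sinPowIntegral_pos (β := x + 2) (by positivity)
    simp only [Function.comp_apply, id, show x + 2 + (s - 2) = x + s by ring]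
    field_simp

lemma tendsto_sinPowIntegral_add_div_add {a b : ℝ} (ha : 0 ≤ a) (hb : 0 ≤ b) :
    Tendsto (fun x => sinPowIntegral (x + a) / sinPowIntegral (x + b)) atTop (𝓝 1) := by
  have h := (tendsto_sinPowIntegral_add_div ha).div (tendsto_sinPowIntegral_add_div hb) one_ne_zero
  rw [one_div_one] at h
  refine h.congr' ?_
  filter_upwards [eventually_ge_atTop 0] with x hx
  have := sinPowIntegral_pos hx
  simp only [Pi.div_apply]
  field_simp

lemma one_div_mul_prod_Icc_eq_sinPowIntegral_mul {α : ℝ} (hα : 0 < α) (m : ℕ) :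
    (1 / α) * ∏ k ∈ Icc 1 m, (k : ℝ) * (α / 2 + k - 1) / ((k - 1 / 2) * (α / 2 + k - 1 / 2)) =
      sinPowIntegral α * ((1 + 2 * m) / (α + 2 * m) *
        (sinPowIntegral (2 * m + 1) / sinPowIntegral (2 * m + α))) := by
  have hterm (j : ℕ) : ((1 + j : ℕ) : ℝ) * (α / 2 + (1 + j : ℕ) - 1) /
      (((1 + j : ℕ) - 1 / 2) * (α / 2 + (1 + j : ℕ) - 1 / 2)) =
      (α + 2 * j) / (α + 2 * j + 1) / ((1 + 2 * j) / (1 + 2 * j + 1)) := by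
    have hj : (0 : ℝ) ≤ j := j.cast_nonneg
    push_cast
    rw [div_div_div_eq, div_eq_div_iff (by nlinarith) (by positivity)]
    ring
  rw [← Finset.Ico_add_one_right_eq_Icc, prod_Ico_eq_prod_range, Nat.add_sub_cancel,
    prod_congr rfl fun j _ => hterm j, prod_div_distrib, prod_range_div_eq_sinPowIntegral hα,
    prod_range_div_eq_sinPowIntegral one_pos, sinPowIntegral_one, add_comm α, add_comm 1]
  have := sinPowIntegral_pos (β := 2 * m + 1) (by positivity)
  have := sinPowIntegral_pos (β := 2 * m + α) (by positivity)
  field_simp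

/-- For `α > 0`, the Wallis integral `I_α = ∫_0^{π/2} (sin θ)^α dθ` satisfies
`I_α = (1/α)·∏_{k=1}^∞ k(α/2+k-1)/((k-1/2)(α/2+k-1/2))`. -/
theorem wallis_integral_eq_product (α : ℝ) (hα : 0 < α) :
    Tendsto (fun m : ℕ => (1 / α) * ∏ k ∈ Finset.Icc 1 m,
        (k : ℝ) * (α/2 + k - 1) / ((k - 1/2) * (α/2 + k - 1/2))) atTop
      (nhds (∫ θ in (0 : ℝ)..(Real.pi/2), Real.sin θ ^ α)) := by
  have hpoly := tendsto_add_mul_div_add_mul_atTop_nhds (1 : ℝ) α 2 two_ne_zero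
  have hratio := (tendsto_sinPowIntegral_add_div_add zero_le_one hα.le).comp
    (tendsto_natCast_atTop_atTop.const_mul_atTop two_pos)
  have h := (hpoly.mul hratio).const_mul (sinPowIntegral α)
  rw [div_self two_ne_zero, mul_one, mul_one] at h
  exact h.congr fun m => (one_div_mul_prod_Icc_eq_sinPowIntegral_mul hα m).symm
end

section
/- For 0 < t < 1, the digamma function satisfies ψ(t) = -γ - (1/Γ(1-t))·∑_{n=1}^∞ Γ(n+1-t)/(n·n!), where γ is the Euler–Mascheroni constant. -/
/-!
Since `ψ = logDeriv Γ` is monotone on `(0, ∞)` (log-convexity of `Γ`) and satisfies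
`ψ (x + 1) = ψ x + 1 / x`, squeezing `ψ (t + n)` between `ψ n` and `ψ (n + 1)` gives
`-γ - ψ t = ∑ₖ (1 / (t + k) - 1 / (k + 1)) = ∫₀¹ (y ^ (t - 1) - 1) / (1 - y) dy`.
Expanding the same integrand instead by the binomial series
`y ^ (t - 1) = ∑ₙ Γ(n + 1 - t) / (n! Γ(1 - t)) (1 - y) ^ n` and integrating term by term
(all terms are nonnegative) turns the integral into `∑ₙ Γ(n + 1 - t) / (n · n! · Γ(1 - t))`.
-/

open Real Filter Finset Set Topology MeasureTheory
open scoped Nat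

namespace Real

theorem Gamma_add_nat_eq_ascPochhammer_mul {s : ℝ} (hs : ∀ m : ℕ, s ≠ -m) (n : ℕ) :
    Gamma (s + n) = (ascPochhammer ℝ n).eval s * Gamma s := by
  induction n with
  | zero => simp
  | succ n ih =>
    have hsn : s + n ≠ 0 := fun h => hs n (eq_neg_of_add_eq_zero_left h)
    rw [Nat.cast_succ, ← add_assoc, Gamma_add_one hsn, ih, ascPochhammer_succ_eval]
    ring

theorem choose_add_nat_sub_one_eq_Gamma {s : ℝ} (hs : ∀ m : ℕ, s ≠ -m) (n : ℕ) :
    Ring.choose (s + n - 1) n = Gamma (s + n) / (n ! * Gamma s) := by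
  have h := Ring.factorial_nsmul_multichoose_eq_ascPochhammer s n
  rw [Ring.multichoose_eq, Polynomial.ascPochhammer_smeval_eq_eval, nsmul_eq_mul] at h
  rw [Gamma_add_nat_eq_ascPochhammer_mul hs, ← h]
  field_simp [Gamma_ne_zero hs]

theorem choose_add_nat_sub_one_pos {s : ℝ} (hs : 0 < s) (n : ℕ) :
    0 < Ring.choose (s + n - 1) n := by
  rw [choose_add_nat_sub_one_eq_Gamma fun m => by linarith]
  have := Gamma_pos_of_pos (show 0 < s + n by positivity)
  have := Gamma_pos_of_pos hs
  positivity

theorem hasSum_choose_mul_pow (a : ℝ) {x : ℝ} (hx : |x| < 1) :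
    HasSum (fun n : ℕ => Ring.choose (a + n - 1) n * x ^ n) (1 / (1 - x) ^ a) := by
  have h := (one_div_one_sub_rpow_hasFPowerSeriesOnBall_zero a).hasSum
    (y := x) (by simpa [enorm_eq_nnnorm, ← NNReal.coe_lt_one] using hx)
  simpa [FormalMultilinearSeries.ofScalars_apply_eq, mul_comm] using h

theorem logDeriv_Gamma_add_one {x : ℝ} (hx : ∀ m : ℕ, x ≠ -m) :
    logDeriv Gamma (x + 1) = logDeriv Gamma x + 1 / x := by
  have hx0 : x ≠ 0 := by simpa using hx 0
  have hfun : (fun y => Gamma (y + 1)) =ᶠ[𝓝 x] fun y => y * Gamma y := by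
    filter_upwards [eventually_ne_nhds hx0] with y hy using Gamma_add_one hy
  have hderiv : deriv Gamma (x + 1) = Gamma x + x * deriv Gamma x := by
    rw [← deriv_comp_add_const, hfun.deriv_eq,
      deriv_fun_mul differentiableAt_fun_id (differentiableAt_Gamma hx), deriv_id'', one_mul]
  rw [logDeriv_apply, logDeriv_apply, hderiv, Gamma_add_one hx0]
  field_simp [Gamma_ne_zero hx]
  ring

theorem monotoneOn_logDeriv_Gamma : MonotoneOn (logDeriv Gamma) (Ioi 0) := by
  have hΓ {x : ℝ} (hx : 0 < x) : DifferentiableAt ℝ Gamma x :=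
    differentiableAt_Gamma fun m => by linarith
  refine (convexOn_log_Gamma.monotoneOn_deriv fun x hx =>
    (hΓ hx).log (Gamma_pos_of_pos hx).ne').congr fun x hx => ?_
  rw [Function.comp_def, deriv.log (hΓ hx) (Gamma_pos_of_pos hx).ne', logDeriv_apply]

theorem logDeriv_Gamma_one : logDeriv Gamma 1 = -eulerMascheroniConstant := by
  rw [logDeriv_apply, hasDerivAt_Gamma_one.deriv, Gamma_one, div_one]

end Real

section FunctionalEquation

variable {ψ : ℝ → ℝ} (hrec : ∀ x > 0, ψ (x + 1) = ψ x + 1 / x)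
include hrec

theorem add_nat_eq_add_sum_of_add_one {x : ℝ} (hx : 0 < x) (n : ℕ) :
    ψ (x + n) = ψ x + ∑ k ∈ range n, 1 / (x + k) := by
  induction n with
  | zero => simp
  | succ n ih =>
    rw [Nat.cast_succ, ← add_assoc, hrec _ (by positivity), ih, sum_range_succ, add_assoc]

theorem hasSum_sub_of_monotoneOn_of_add_one (hmono : MonotoneOn ψ (Ioi 0)) {t : ℝ}
    (ht0 : 0 < t) (ht1 : t ≤ 1) :
    HasSum (fun k : ℕ => 1 / (t + k) - 1 / (k + 1)) (ψ 1 - ψ t) := by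
  have hnonneg (k : ℕ) : 0 ≤ 1 / (t + k) - 1 / (k + 1) :=
    sub_nonneg.2 (one_div_le_one_div_of_le (by positivity) (by linarith))
  have hpartial (n : ℕ) : ∑ k ∈ range n, (1 / (t + k) - 1 / (k + 1)) =
      ψ 1 - ψ t + (ψ (t + n) - ψ (1 + n)) := by
    rw [sum_sub_distrib, add_nat_eq_add_sum_of_add_one hrec ht0,
      add_nat_eq_add_sum_of_add_one hrec one_pos]
    simp only [add_comm (1 : ℝ)]
    ring
  -- `ψ n ≤ ψ (t + n) ≤ ψ (1 + n) = ψ n + 1 / n`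
  have hgap : Tendsto (fun n : ℕ => ψ (t + n) - ψ (1 + n)) atTop (𝓝 0) := by
    have hlower : Tendsto (fun n : ℕ => -(1 / (n : ℝ))) atTop (𝓝 0) := by
      simpa using (tendsto_one_div_atTop_nhds_zero_nat (𝕜 := ℝ)).neg
    refine tendsto_of_tendsto_of_tendsto_of_le_of_le' hlower tendsto_const_nhds ?_ ?_
    · filter_upwards [eventually_gt_atTop 0] with n hn
      have hn' : (0 : ℝ) < n := by exact_mod_cast hn
      have := hmono hn' (show 0 < t + n by positivity) (by linarith)
      have := hrec n hn'
      rw [add_comm (1 : ℝ)]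
      linarith
    · filter_upwards with n
      exact sub_nonpos.2 (hmono (show 0 < t + n by positivity)
        (show (0 : ℝ) < 1 + n by positivity) (by linarith))
  rw [hasSum_iff_tendsto_nat_of_nonneg hnonneg]
  simp_rw [hpartial]
  simpa using (tendsto_const_nhds (x := ψ 1 - ψ t)).add hgap

end FunctionalEquation

section Interchange

variable {α : Type*} [MeasurableSpace α] {μ : Measure α}

theorem tsum_ofReal_integral_eq_lintegral_of_hasSum {F : ℕ → α → ℝ} {f : α → ℝ}
    (hint : ∀ n, Integrable (F n) μ) (hnonneg : ∀ n, 0 ≤ᵐ[μ] F n)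
    (hsum : ∀ᵐ x ∂μ, HasSum (F · x) (f x)) :
    ∑' n, ENNReal.ofReal (∫ x, F n x ∂μ) = ∫⁻ x, ENNReal.ofReal (f x) ∂μ := by
  simp_rw [ofReal_integral_eq_lintegral_ofReal (hint _) (hnonneg _)]
  rw [← lintegral_tsum fun n => (hint n).aestronglyMeasurable.aemeasurable.ennreal_ofReal]
  refine lintegral_congr_ae ?_
  filter_upwards [hsum, ae_all_iff.2 hnonneg] with x hx hx0
  rw [← ENNReal.ofReal_tsum_of_nonneg hx0 hx.summable, hx.tsum_eq]

theorem hasSum_integral_of_nonneg_of_hasSum_integral {F G : ℕ → α → ℝ} {f : α → ℝ} {b : ℝ}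
    (hFint : ∀ n, Integrable (F n) μ) (hFnonneg : ∀ n, 0 ≤ᵐ[μ] F n)
    (hFsum : ∀ᵐ x ∂μ, HasSum (F · x) (f x))
    (hGint : ∀ n, Integrable (G n) μ) (hGnonneg : ∀ n, 0 ≤ᵐ[μ] G n)
    (hGsum : ∀ᵐ x ∂μ, HasSum (G · x) (f x)) (hb : HasSum (fun n => ∫ x, G n x ∂μ) b) :
    HasSum (fun n => ∫ x, F n x ∂μ) b := by
  have hFi0 (n : ℕ) : 0 ≤ ∫ x, F n x ∂μ := integral_nonneg_of_ae (hFnonneg n)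
  have hGi0 (n : ℕ) : 0 ≤ ∫ x, G n x ∂μ := integral_nonneg_of_ae (hGnonneg n)
  have heq : ∑' n, ENNReal.ofReal (∫ x, F n x ∂μ) = ENNReal.ofReal b := by
    rw [tsum_ofReal_integral_eq_lintegral_of_hasSum hFint hFnonneg hFsum,
      ← tsum_ofReal_integral_eq_lintegral_of_hasSum hGint hGnonneg hGsum, ← hb.tsum_eq,
      ENNReal.ofReal_tsum_of_nonneg hGi0 hb.summable]
  have hsummable : Summable fun n => ∫ x, F n x ∂μ := by
    refine (ENNReal.summable_toReal (heq ▸ ENNReal.ofReal_ne_top)).congr fun n => ?_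
    exact ENNReal.toReal_ofReal (hFi0 n)
  convert hsummable.hasSum
  rw [← ENNReal.ofReal_eq_ofReal_iff (hb.nonneg hGi0) (tsum_nonneg hFi0),
    ENNReal.ofReal_tsum_of_nonneg hFi0 hsummable, heq]

end Interchange

theorem setIntegral_Ioo_eq_intervalIntegral {a b : ℝ} (hab : a ≤ b) (g : ℝ → ℝ) :
    ∫ y in Ioo a b, g y = ∫ y in a..b, g y := by
  rw [intervalIntegral.integral_of_le hab, integral_Ioc_eq_integral_Ioo]

theorem integral_one_sub_pow (n : ℕ) : ∫ y in (0 : ℝ)..1, (1 - y) ^ n = 1 / (n + 1) := by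
  simp [intervalIntegral.integral_comp_sub_left (fun y => y ^ n)]

theorem integral_rpow_add_nat_sub_pow {s : ℝ} (hs : -1 < s) (k : ℕ) :
    ∫ y in (0 : ℝ)..1, (y ^ (s + k) - y ^ k) = 1 / (s + k + 1) - 1 / (k + 1) := by
  have hsk : -1 < s + k := by linarith [(Nat.cast_nonneg k : (0 : ℝ) ≤ k)]
  rw [intervalIntegral.integral_sub (intervalIntegral.intervalIntegrable_rpow' hsk)
    (intervalIntegral.intervalIntegrable_pow k), integral_rpow (Or.inl hsk), integral_pow,
    one_rpow, zero_rpow (by linarith)]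
  simp

theorem hasSum_choose_succ_mul_one_sub_pow (a : ℝ) {y : ℝ} (hy : y ∈ Ioo (0 : ℝ) 1) :
    HasSum (fun n : ℕ => Ring.choose (a + (n + 1 : ℕ) - 1) (n + 1) * (1 - y) ^ n)
      ((y ^ (-a) - 1) / (1 - y)) := by
  have hy1 : 1 - y ≠ 0 := by linarith [hy.2]
  have h := hasSum_choose_mul_pow a (x := 1 - y)
    (by rw [abs_lt]; constructor <;> linarith [hy.1, hy.2])
  rw [sub_sub_cancel, one_div, ← rpow_neg hy.1.le] at h
  have h' := ((hasSum_nat_add_iff' 1).2 h).div_const (1 - y)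
  simp only [range_one, sum_singleton, Nat.cast_zero, add_zero, Ring.choose_zero_right,
    pow_zero, mul_one] at h'
  refine h'.congr_fun fun n => ?_
  rw [pow_succ, ← mul_assoc, mul_div_cancel_right₀ _ hy1]

theorem hasSum_rpow_add_nat_sub_pow (s : ℝ) {y : ℝ} (hy : y ∈ Ioo (0 : ℝ) 1) :
    HasSum (fun k : ℕ => y ^ (s + k) - y ^ k) ((y ^ s - 1) / (1 - y)) := by
  have hgeom := hasSum_geometric_of_lt_one hy.1.le hy.2
  rw [div_eq_mul_inv, sub_mul, one_mul]
  refine ((hgeom.mul_left (y ^ s)).sub hgeom).congr_fun fun k => ?_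
  rw [rpow_add hy.1, rpow_natCast]

theorem hasSum_choose_succ_div {t : ℝ} (ht0 : 0 < t) (ht1 : t < 1) :
    HasSum (fun n : ℕ => Ring.choose (1 - t + (n + 1 : ℕ) - 1) (n + 1) / (n + 1))
      (-eulerMascheroniConstant - logDeriv Gamma t) := by
  set μ := volume.restrict (Ioo (0 : ℝ) 1)
  have hdigamma : HasSum (fun k : ℕ => ∫ y, (y ^ (t - 1 + k) - y ^ k) ∂μ)
      (-eulerMascheroniConstant - logDeriv Gamma t) := by
    rw [← logDeriv_Gamma_one]
    refine (hasSum_sub_of_monotoneOn_of_add_one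
      (fun x hx => logDeriv_Gamma_add_one fun m => by linarith [hx])
      monotoneOn_logDeriv_Gamma ht0 ht1.le).congr_fun fun k => ?_
    rw [setIntegral_Ioo_eq_intervalIntegral zero_le_one,
      integral_rpow_add_nat_sub_pow (by linarith)]
    ring_nf
  have hsum := hasSum_integral_of_nonneg_of_hasSum_integral (μ := μ)
    (F := fun n y => Ring.choose (1 - t + (n + 1 : ℕ) - 1) (n + 1) * (1 - y) ^ n)
    (G := fun k y => y ^ (t - 1 + k) - y ^ k) (f := fun y => (y ^ (t - 1) - 1) / (1 - y))
    (fun n => (by fun_prop : Continuous _).integrableOn_Icc.mono_set Ioo_subset_Icc_self)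
    (fun n => ae_restrict_of_forall_mem measurableSet_Ioo fun y hy =>
      mul_nonneg (choose_add_nat_sub_one_pos (by linarith) _).le
        (pow_nonneg (by linarith [hy.2]) _))
    (ae_restrict_of_forall_mem measurableSet_Ioo fun y hy => by
      simpa using hasSum_choose_succ_mul_one_sub_pow (1 - t) hy)
    (fun k => (intervalIntegrable_iff_integrableOn_Ioo_of_le zero_le_one).1
      ((intervalIntegral.intervalIntegrable_rpow'
        (by linarith [(Nat.cast_nonneg k : (0 : ℝ) ≤ k)])).sub
        (intervalIntegral.intervalIntegrable_pow k)))
    (fun k => ae_restrict_of_forall_mem measurableSet_Ioo fun y hy => by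
      simp only [Pi.zero_apply, sub_nonneg, ← rpow_natCast y k]
      exact rpow_le_rpow_of_exponent_ge hy.1 hy.2.le (by linarith))
    (ae_restrict_of_forall_mem measurableSet_Ioo fun y hy => hasSum_rpow_add_nat_sub_pow _ hy)
    hdigamma
  refine hsum.congr_fun fun n => ?_
  rw [setIntegral_Ioo_eq_intervalIntegral zero_le_one, intervalIntegral.integral_const_mul,
    integral_one_sub_pow]
  ring

/-- For `0 < t < 1`, the digamma function `ψ = Γ'/Γ` satisfies
`ψ(t) = -γ - (1/Γ(1-t))·∑_{n=1}^∞ Γ(n+1-t)/(n·n!)`. -/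
theorem digamma_series (t : ℝ) (ht0 : 0 < t) (ht1 : t < 1) :
    deriv Real.Gamma t / Real.Gamma t =
      -Real.eulerMascheroniConstant -
        (1 / Real.Gamma (1 - t)) *
          ∑' n : ℕ, Real.Gamma ((n + 1 : ℕ) + 1 - t) / (((n + 1 : ℕ) : ℝ) * (Nat.factorial (n + 1))) := by
  have hs : ∀ m : ℕ, 1 - t ≠ -m := fun m => by linarith [(Nat.cast_nonneg m : (0 : ℝ) ≤ m)]
  have hterm (n : ℕ) : Gamma ((n + 1 : ℕ) + 1 - t) / (((n + 1 : ℕ) : ℝ) * (n + 1)!) =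
      Gamma (1 - t) * (Ring.choose (1 - t + (n + 1 : ℕ) - 1) (n + 1) / (n + 1)) := by
    rw [choose_add_nat_sub_one_eq_Gamma hs, add_comm (1 - t), ← add_sub_assoc]
    field_simp [Gamma_ne_zero hs]
    push_cast
    ring
  rw [tsum_congr hterm, tsum_mul_left, (hasSum_choose_succ_div ht0 ht1).tsum_eq,
    ← logDeriv_apply]
  field_simp [Gamma_ne_zero hs]
  ring
end

section
/- For positive integers n and real t with 0 < t < 1, Γ(n+1-t)·Γ(t) = (n-1)!·∏_{k=1}^∞ k(n+k-1)/((k-1+t)(n+k-t)). -/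
open Real Filter Finset

/-!
Euler's limit `Γ(s) = lim m^s m! / (s (s+1) ⋯ (s+m))` expresses each rising product
`s (s+1) ⋯ (s+m-1)` through `GammaSeq s m`. In a quotient of two such pairs of products with
`a + b = c + d` the powers of `m` cancel, so `∏_{j<m} (a+j)(b+j)/((c+j)(d+j))` tends to
`Γ(c)Γ(d)/(Γ(a)Γ(b))`. Shifting `k = j + 1`, the theorem is the case `a = 1`, `b = n`, `c = t`,
`d = n + 1 - t`, with `Γ(n) = (n-1)!`.
-/

namespace Real

theorem GammaSeq_pos {s : ℝ} (hs : 0 < s) {m : ℕ} (hm : m ≠ 0) : 0 < GammaSeq s m :=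
  div_pos (mul_pos (rpow_pos_of_pos (by positivity) s) (by positivity))
    (prod_pos fun j _ => by positivity)

theorem prod_range_add_eq_GammaSeq {s : ℝ} (hs : 0 < s) {m : ℕ} (hm : m ≠ 0) :
    ∏ j ∈ range m, (s + j) = (m : ℝ) ^ s * m.factorial / (GammaSeq s m * (s + m)) := by
  have hprod : 0 < ∏ j ∈ range m, (s + j) := prod_pos fun j _ => by positivity
  have hpow : 0 < (m : ℝ) ^ s := rpow_pos_of_pos (by positivity) s
  rw [GammaSeq, prod_range_succ]
  field_simp

theorem tendsto_prod_range_mul_div_mul_of_add_eq {a b c d : ℝ} (ha : 0 < a) (hb : 0 < b)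
    (hc : 0 < c) (hd : 0 < d) (habcd : a + b = c + d) :
    Tendsto (fun m : ℕ => ∏ j ∈ range m, (a + j) * (b + j) / ((c + j) * (d + j))) atTop
      (nhds (Gamma c * Gamma d / (Gamma a * Gamma b))) := by
  -- `(c + m)(d + m) / ((a + m)(b + m))`, left over from the top factors of the `GammaSeq` products
  have hcorr : Tendsto (fun m : ℕ => (m / (m + a) * (m / (m + b)) / (m / (m + c) * (m / (m + d)))
      : ℝ)) atTop (nhds 1) := by
    have h := ((tendsto_natCast_div_add_atTop a).mul (tendsto_natCast_div_add_atTop b)).div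
      ((tendsto_natCast_div_add_atTop c).mul (tendsto_natCast_div_add_atTop d)) (by norm_num)
    rwa [mul_one, div_one] at h
  have hΓ := (((GammaSeq_tendsto_Gamma c).mul (GammaSeq_tendsto_Gamma d)).div
    ((GammaSeq_tendsto_Gamma a).mul (GammaSeq_tendsto_Gamma b))
    (mul_pos (Gamma_pos_of_pos ha) (Gamma_pos_of_pos hb)).ne').mul hcorr
  rw [mul_one] at hΓ
  refine hΓ.congr' ?_
  filter_upwards [eventually_ne_atTop 0] with m hm
  have hm0 : (0 : ℝ) < m := by positivity
  have hpow : (m : ℝ) ^ a * (m : ℝ) ^ b = (m : ℝ) ^ c * (m : ℝ) ^ d := by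
    rw [← rpow_add hm0, ← rpow_add hm0, habcd]
  have hGa := GammaSeq_pos ha hm
  have hGb := GammaSeq_pos hb hm
  have hGc := GammaSeq_pos hc hm
  have hGd := GammaSeq_pos hd hm
  rw [prod_div_distrib, prod_mul_distrib, prod_mul_distrib, prod_range_add_eq_GammaSeq ha hm,
    prod_range_add_eq_GammaSeq hb hm, prod_range_add_eq_GammaSeq hc hm,
    prod_range_add_eq_GammaSeq hd hm, Pi.div_apply]
  field_simp
  linear_combination (-((m + c) * (m + d) * (a + m) * (b + m) : ℝ)) * hpow

end Real

/-- For positive integer `n` and `0 < t < 1`,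
`Γ(n+1-t)·Γ(t) = (n-1)!·∏_{k=1}^∞ k(n+k-1)/((k-1+t)(n+k-t))`. -/
theorem gamma_shift_product (n : ℕ) (hn : 1 ≤ n) (t : ℝ) (ht0 : 0 < t) (ht1 : t < 1) :
    Tendsto (fun m : ℕ => ((Nat.factorial (n - 1)) : ℝ) * ∏ k ∈ Finset.Icc 1 m,
        (k : ℝ) * (n + k - 1) / ((k - 1 + t) * (n + k - t))) atTop
      (nhds (Real.Gamma ((n : ℝ) + 1 - t) * Real.Gamma t)) := by
  have hΓn : Gamma n = (n - 1).factorial := by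
    rw [← Gamma_nat_eq_factorial, Nat.cast_sub hn, Nat.cast_one, sub_add_cancel]
  have hlim := (tendsto_prod_range_mul_div_mul_of_add_eq one_pos (by positivity : (0 : ℝ) < n)
    ht0 (by linarith : (0 : ℝ) < n + 1 - t) (by ring)).const_mul ((n - 1).factorial : ℝ)
  rw [Gamma_one, one_mul, hΓn, mul_div_cancel₀ _ (by positivity), mul_comm] at hlim
  refine hlim.congr fun m => ?_
  rw [← Ico_add_one_right_eq_Icc, prod_Ico_eq_prod_range, Nat.add_sub_cancel]
  congr 1
  refine prod_congr rfl fun j _ => ?_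
  push_cast
  ring
end

section
/- For 0 < x < 1/2, the function h(x) = (1 + 0.5/x)^x·√(x+0.5) is strictly increasing. -/
/-!
Bernoulli's inequality with the exponent `s / t < 1` gives `(1 + a/s)^(s/t) < 1 + a/t` for
`0 < s < t`, so `t ↦ (1 + a/t)^t` is strictly increasing on `(0, ∞)` when `a > 0`. With `a = 1/2`
this is the first factor of `h`; the second factor `√(x + 1/2)` is positive and strictly increasing.
-/

open Real Set

theorem strictMonoOn_one_add_div_rpow_self {a : ℝ} (ha : 0 < a) :
    StrictMonoOn (fun t : ℝ => (1 + a / t) ^ t) (Ioi 0) := by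
  intro s (hs : 0 < s) t (ht : 0 < t) hst
  have hbernoulli : (1 + a / s) ^ (s / t) < 1 + a / t :=
    calc (1 + a / s) ^ (s / t) < 1 + s / t * (a / s) :=
          rpow_one_add_lt_one_add_mul_self (by linarith [div_pos ha hs]) (div_pos ha hs).ne'
            (div_pos hs ht) ((div_lt_one ht).2 hst)
      _ = 1 + a / t := by field_simp
  calc (1 + a / s) ^ s = ((1 + a / s) ^ (s / t)) ^ t := by
        rw [← rpow_mul (by positivity), div_mul_cancel₀ _ ht.ne']
    _ < (1 + a / t) ^ t := rpow_lt_rpow (by positivity) hbernoulli ht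

/-- The function `h(x) = (1 + 1/(2x))^x · √(x + 1/2)` is strictly increasing on `(0, 1/2)`. -/
theorem h_strict_mono :
    StrictMonoOn (fun x : ℝ => (1 + 1 / (2 * x)) ^ x * Real.sqrt (x + 1/2))
      (Set.Ioo (0 : ℝ) (1/2)) := by
  intro x ⟨hx, _⟩ y ⟨hy, _⟩ hxy
  have hdiv : ∀ z : ℝ, 1 / (2 * z) = 1 / 2 / z := fun z => by rw [div_div]
  simp only [hdiv]
  exact mul_lt_mul'' (strictMonoOn_one_add_div_rpow_self one_half_pos hx (hx.trans hxy) hxy)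
    (sqrt_lt_sqrt (by linarith) (by linarith)) (by positivity) (sqrt_nonneg _)
end
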